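/- arXiv:1202.5012 — 2 statements merged into one kernel-verified Lean document; each statement's English description precedes it below -/
import Mathlib

section
/- Define P : ℕ → ℕ → Bool by P x 0 = true, P 0 y = true, and P (x+1) (y+1) = xor (P x (y+1)) (P (x+1) y) (each interior cell is the exclusive-or of the cell to its west and the cell to its south, with all cells on the two axes set to true). Then for all natural numbers x and y, P x y = true if and only if (x,y) ∈ S_△. (This is the correctness of the xor-rule pattern painted by the Sierpinski tile assembly constructions.) -/
/-- The `i`-th stage of the discrete Sierpinski triangle:
`S_0 = {(0,0)}`, `S_{i+1} = S_i ∪ (S_i + 2^i·V)` with `V = {(1,0),(0,1)}`. -/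
def sierpStage : ℕ → Set (ℕ × ℕ)
  | 0 => {(0, 0)}
  | i + 1 => sierpStage i ∪
      {p | ∃ m ∈ sierpStage i, ∃ n ∈ ({(1, 0), (0, 1)} : Set (ℕ × ℕ)), p = m + (2 ^ i) • n}

/-- The discrete Sierpinski triangle `S_△ = ⋃ i, S_i`. -/
def sierpinski : Set (ℕ × ℕ) := ⋃ i, sierpStage i

/-- The xor-rule pattern: `true` on both axes, and each interior cell is the
exclusive-or of the cell to its west and the cell to its south. -/
def xorPattern : ℕ → ℕ → Bool
  | _, 0 => true
  | 0, _ + 1 => true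
  | x + 1, y + 1 => xor (xorPattern x (y + 1)) (xorPattern (x + 1) y)

/-!
By Pascal's rule the xor recursion is Pascal's triangle read modulo 2, so `xorPattern x y` is the
parity of `(x + y).choose x`. By Lucas's theorem for `p = 2` this binomial coefficient is odd
exactly when `x` and `y` have no binary digit in common, i.e. `x &&& y = 0`. On the other side,
`sierpStage i` consists of the pairs below `2 ^ i` with disjoint binary digits: the two translates
by `2 ^ i` set bit `i` in exactly one coordinate.
-/

theorem Nat.and_eq_zero_iff_mod_two_and_div_two {x y : ℕ} :
    x &&& y = 0 ↔ ¬(x % 2 = 1 ∧ y % 2 = 1) ∧ x / 2 &&& y / 2 = 0 := by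
  rw [← Nat.and_mod_two_eq_one, ← Nat.and_div_two]
  omega

theorem Nat.choose_add_mod_two_eq_one_iff (x y : ℕ) :
    (x + y).choose x % 2 = 1 ↔ x &&& y = 0 := by
  induction x using Nat.strong_induction_on generalizing y with
  | _ x ih =>
    rcases Nat.eq_zero_or_pos x with rfl | hx
    · simp
    have lucas : (x + y).choose x % 2
        = ((x + y) % 2).choose (x % 2) * ((x + y) / 2).choose (x / 2) % 2 :=
      Choose.choose_modEq_choose_mod_mul_choose_div_nat (p := 2)
    rw [lucas, Nat.and_eq_zero_iff_mod_two_and_div_two]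
    by_cases hcarry : x % 2 = 1 ∧ y % 2 = 1
    · simp [hcarry, show (x + y) % 2 = 0 by omega]
    · have hlow : ((x + y) % 2).choose (x % 2) = 1 := by
        rcases Nat.mod_two_eq_zero_or_one x with h | h
        · simp [h]
        · rw [h, show (x + y) % 2 = 1 by omega, Nat.choose_self]
      rw [hlow, one_mul, show (x + y) / 2 = x / 2 + y / 2 by omega, ih _ (by omega)]
      exact (and_iff_right hcarry).symm

theorem Nat.two_pow_add_and_of_lt {i y : ℕ} (x : ℕ) (hy : y < 2 ^ i) :
    (2 ^ i + x) &&& y = x &&& y := by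
  apply Nat.eq_of_testBit_eq
  intro j
  rcases lt_or_ge j i with hj | hj
  · rw [Nat.testBit_and, Nat.testBit_and, Nat.testBit_two_pow_add_gt hj]
  · have hyj : y.testBit j = false :=
      Nat.testBit_lt_two_pow (hy.trans_le (Nat.pow_le_pow_right two_pos hj))
    simp [hyj]

theorem Nat.two_pow_add_and_two_pow_add_ne_zero {i x y : ℕ} (hx : x < 2 ^ i) (hy : y < 2 ^ i) :
    (2 ^ i + x) &&& (2 ^ i + y) ≠ 0 := by
  intro h
  have := congrArg (Nat.testBit · i) h
  simp [Nat.testBit_two_pow_add_eq, Nat.testBit_lt_two_pow hx, Nat.testBit_lt_two_pow hy] at this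

theorem xorPattern_eq_bodd_choose : ∀ x y : ℕ, xorPattern x y = ((x + y).choose x).bodd
  | _, 0 => by simp [xorPattern]
  | 0, _ + 1 => by simp [xorPattern]
  | x + 1, y + 1 => by
    rw [xorPattern, xorPattern_eq_bodd_choose x, xorPattern_eq_bodd_choose (x + 1) y,
      ← Nat.bodd_add, show x + 1 + (y + 1) = x + (y + 1) + 1 by omega, Nat.choose_succ_succ',
      show x + (y + 1) = x + 1 + y by omega]

theorem mem_sierpStage_succ {i x y : ℕ} : (x, y) ∈ sierpStage (i + 1) ↔
    (x, y) ∈ sierpStage i ∨ (∃ a, x = 2 ^ i + a ∧ (a, y) ∈ sierpStage i) ∨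
      (∃ b, y = 2 ^ i + b ∧ (x, b) ∈ sierpStage i) := by
  simp only [sierpStage, Set.mem_union, Set.mem_ofPred_eq, Set.mem_insert_iff,
    Set.mem_singleton_iff, exists_eq_or_imp, exists_eq_left, Prod.exists, Prod.smul_mk,
    smul_eq_mul, mul_one, mul_zero, Prod.mk_add_mk, Prod.mk.injEq, add_zero]
  constructor
  · rintro (h | ⟨a, b, h, ⟨rfl, rfl⟩ | ⟨rfl, rfl⟩⟩)
    · exact Or.inl h
    · exact Or.inr (Or.inl ⟨a, add_comm _ _, h⟩)
    · exact Or.inr (Or.inr ⟨b, add_comm _ _, h⟩)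
  · rintro (h | ⟨a, rfl, h⟩ | ⟨b, rfl, h⟩)
    · exact Or.inl h
    · exact Or.inr ⟨a, y, h, Or.inl ⟨add_comm _ _, rfl⟩⟩
    · exact Or.inr ⟨x, b, h, Or.inr ⟨rfl, add_comm _ _⟩⟩

theorem mem_sierpStage_iff {i x y : ℕ} :
    (x, y) ∈ sierpStage i ↔ x < 2 ^ i ∧ y < 2 ^ i ∧ x &&& y = 0 := by
  induction i generalizing x y with
  | zero => simp +contextual [sierpStage]
  | succ i ih =>
    simp only [mem_sierpStage_succ, ih, pow_succ]
    constructor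
    · rintro (⟨hx, hy, h⟩ | ⟨a, rfl, ha, hy, h⟩ | ⟨b, rfl, hx, hb, h⟩)
      · exact ⟨by omega, by omega, h⟩
      · exact ⟨by omega, by omega, by rwa [Nat.two_pow_add_and_of_lt a hy]⟩
      · exact ⟨by omega, by omega, by rwa [Nat.and_comm, Nat.two_pow_add_and_of_lt b hx,
          Nat.and_comm]⟩
    · rintro ⟨hx, hy, h⟩
      rcases lt_or_ge x (2 ^ i) with hx' | hx' <;> rcases lt_or_ge y (2 ^ i) with hy' | hy'
      · exact Or.inl ⟨hx', hy', h⟩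
      · obtain ⟨b, rfl⟩ := Nat.exists_eq_add_of_le hy'
        rw [Nat.and_comm, Nat.two_pow_add_and_of_lt b hx', Nat.and_comm] at h
        exact Or.inr (Or.inr ⟨b, rfl, hx', by omega, h⟩)
      · obtain ⟨a, rfl⟩ := Nat.exists_eq_add_of_le hx'
        rw [Nat.two_pow_add_and_of_lt a hy'] at h
        exact Or.inr (Or.inl ⟨a, rfl, by omega, hy', h⟩)
      · obtain ⟨a, rfl⟩ := Nat.exists_eq_add_of_le hx'
        obtain ⟨b, rfl⟩ := Nat.exists_eq_add_of_le hy'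
        exact absurd h (Nat.two_pow_add_and_two_pow_add_ne_zero (by omega) (by omega))

theorem mem_sierpinski_iff {x y : ℕ} : (x, y) ∈ sierpinski ↔ x &&& y = 0 := by
  simp only [sierpinski, Set.mem_iUnion, mem_sierpStage_iff]
  refine ⟨fun ⟨_, _, _, h⟩ => h, fun h => ⟨x + y, ?_, ?_, h⟩⟩
  · exact (Nat.le_add_right x y).trans_lt Nat.lt_two_pow_self
  · exact (Nat.le_add_left y x).trans_lt Nat.lt_two_pow_self

/-- Correctness of the xor-rule pattern painted by the Sierpinski tile
assembly constructions: `P x y = true` iff `(x,y) ∈ S_△`. -/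
theorem xorPattern_iff_sierpinski (x y : ℕ) :
    xorPattern x y = true ↔ (x, y) ∈ sierpinski := by
  rw [mem_sierpinski_iff, ← Nat.choose_add_mod_two_eq_one_iff, xorPattern_eq_bodd_choose,
    Nat.mod_two_of_bodd]
  cases ((x + y).choose x).bodd <;> simp
end

section
/- The scale-factor-2 discrete Sierpinski triangle S_{2△} is 4-connected: for every point (u,v) ∈ S_{2△} there exists a finite sequence of points of S_{2△} starting at (0,0) and ending at (u,v) in which consecutive points differ by exactly 1 in exactly one coordinate. -/
/-- The 2×2 block of points corresponding to `(x,y)` at scale factor 2. -/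
def block (p : ℕ × ℕ) : Set (ℕ × ℕ) :=
  {q | ∃ a ∈ ({0, 1} : Set ℕ), ∃ b ∈ ({0, 1} : Set ℕ), q = (2 * p.1 + a, 2 * p.2 + b)}

/-- The Sierpinski triangle at scale factor 2. -/
def sierpinski2 : Set (ℕ × ℕ) := ⋃ p ∈ sierpinski, block p

/-- Two points of `ℕ × ℕ` are 4-adjacent if they differ by exactly `1` in
exactly one coordinate. -/
def FourAdj (p q : ℕ × ℕ) : Prop :=
  (p.1 = q.1 ∧ (p.2 + 1 = q.2 ∨ q.2 + 1 = p.2)) ∨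
  (p.2 = q.2 ∧ (p.1 + 1 = q.1 ∨ q.1 + 1 = p.1))

local notation "V" => ({(1, 0), (0, 1)} : Set (ℕ × ℕ))

def FourJoined (s : Set (ℕ × ℕ)) : ℕ × ℕ → ℕ × ℕ → Prop :=
  Relation.ReflTransGen fun a b => a ∈ s ∧ b ∈ s ∧ FourAdj a b

def blowUp (s : Set (ℕ × ℕ)) : Set (ℕ × ℕ) := ⋃ p ∈ s, block p

section FourAdj

variable {p q e : ℕ × ℕ}

lemma fourAdj_add_of_mem (he : e ∈ V) (p : ℕ × ℕ) : FourAdj p (p + e) := by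
  rcases he with rfl | rfl <;> simp [FourAdj]

lemma FourAdj.symm (h : FourAdj p q) : FourAdj q p := by
  unfold FourAdj at *; tauto

lemma fourAdj_iff_exists_mem : FourAdj p q ↔ ∃ e ∈ V, q = p + e ∨ p = q + e := by
  refine ⟨fun h => ?_, ?_⟩
  · obtain ⟨x, y⟩ := p; obtain ⟨x', y'⟩ := q
    dsimp only [FourAdj] at h
    rcases h with ⟨rfl, rfl | rfl⟩ | ⟨rfl, rfl | rfl⟩
    exacts [⟨(0, 1), by simp⟩, ⟨(0, 1), by simp⟩, ⟨(1, 0), by simp⟩, ⟨(1, 0), by simp⟩]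
  · rintro ⟨e, he, rfl | rfl⟩
    exacts [fourAdj_add_of_mem he p, (fourAdj_add_of_mem he q).symm]

lemma FourAdj.add_right (h : FourAdj p q) (v : ℕ × ℕ) : FourAdj (p + v) (q + v) := by
  obtain ⟨x, y⟩ := p; obtain ⟨x', y'⟩ := q
  simp only [FourAdj, Prod.fst_add, Prod.snd_add] at h ⊢
  omega

end FourAdj

namespace FourJoined

variable {s t : Set (ℕ × ℕ)} {a b : ℕ × ℕ}

lemma mono (hst : s ⊆ t) (h : FourJoined s a b) : FourJoined t a b :=
  Relation.ReflTransGen.mono (fun _ _ ⟨ha, hb, hab⟩ => ⟨hst ha, hst hb, hab⟩) _ _ h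

lemma add_right (h : FourJoined s a b) (v : ℕ × ℕ) :
    FourJoined ((· + v) '' s) (a + v) (b + v) := by
  induction h with
  | refl => exact .refl
  | tail _ hstep ih =>
    obtain ⟨hb, hc, hbc⟩ := hstep
    exact ih.tail ⟨Set.mem_image_of_mem _ hb, Set.mem_image_of_mem _ hc, hbc.add_right v⟩

lemma symm (h : FourJoined s a b) : FourJoined s b a := by
  induction h with
  | refl => exact .refl
  | tail _ hstep ih => exact ih.head ⟨hstep.2.1, hstep.1, hstep.2.2.symm⟩

lemma tail_add {e : ℕ × ℕ} (h : FourJoined s a b) (hb : b ∈ s) (he : e ∈ V) (hbe : b + e ∈ s) :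
    FourJoined s a (b + e) :=
  h.tail ⟨hb, hbe, fourAdj_add_of_mem he b⟩

lemma of_smul_mem {e : ℕ × ℕ} (he : e ∈ V) {k : ℕ} (h : ∀ t ≤ k, t • e ∈ s) :
    FourJoined s 0 (k • e) := by
  induction k with
  | zero => rw [zero_smul]; exact .refl
  | succ k ih =>
    rw [succ_nsmul]
    exact (ih fun t ht => h t (by omega)).tail_add (h k (by omega)) he
      (by rw [← succ_nsmul]; exact h (k + 1) le_rfl)

lemma exists_list (ha : a ∈ s) (h : FourJoined s a b) :
    ∃ l : List (ℕ × ℕ), l.head? = some a ∧ l.getLast? = some b ∧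
      (∀ q ∈ l, q ∈ s) ∧ l.IsChain FourAdj := by
  obtain ⟨l, hchain, hlast⟩ := List.exists_isChain_cons_of_relationReflTransGen h
  refine ⟨a :: l, rfl, by rw [List.getLast?_eq_some_getLast (List.cons_ne_nil _ _), hlast],
    hchain.induction _ _ (fun _ _ hr _ => hr.2.1) (fun _ => ha), hchain.imp fun _ _ hr => hr.2.2⟩

end FourJoined

section Stage

variable {i : ℕ} {e m p : ℕ × ℕ}

lemma sierpStage_subset_succ (i : ℕ) : sierpStage i ⊆ sierpStage (i + 1) :=
  Set.subset_union_left

lemma add_smul_mem_sierpStage_succ (hm : m ∈ sierpStage i) (he : e ∈ V) :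
    m + 2 ^ i • e ∈ sierpStage (i + 1) :=
  Or.inr ⟨m, hm, e, he, rfl⟩

lemma smul_mem_sierpStage (he : e ∈ V) {t : ℕ} (ht : t < 2 ^ i) : t • e ∈ sierpStage i := by
  induction i generalizing t with
  | zero =>
    obtain rfl : t = 0 := by simpa using ht
    rw [zero_smul]
    rfl
  | succ i ih =>
    by_cases hti : t < 2 ^ i
    · exact sierpStage_subset_succ i (ih hti)
    · obtain ⟨u, rfl⟩ := Nat.exists_eq_add_of_le (not_lt.mp hti)
      rw [add_smul, add_comm (2 ^ i • e)]
      exact add_smul_mem_sierpStage_succ (ih (t := u) (by rw [pow_succ] at ht; omega)) he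

lemma fourJoined_sierpStage (hp : p ∈ sierpStage i) : FourJoined (sierpStage i) 0 p := by
  induction i generalizing p with
  | zero =>
    obtain rfl : p = (0, 0) := hp
    exact .refl
  | succ i ih =>
    rcases hp with hp | ⟨m, hm, e, he, rfl⟩
    · exact (ih hp).mono (sierpStage_subset_succ i)
    have h_axis : FourJoined (sierpStage (i + 1)) 0 (2 ^ i • e) :=
      .of_smul_mem he fun t ht => smul_mem_sierpStage he (by grind [Nat.two_pow_pos])
    have h_copy : FourJoined (sierpStage (i + 1)) (0 + 2 ^ i • e) (m + 2 ^ i • e) :=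
      ((ih hm).add_right _).mono
        (Set.image_subset_iff.mpr fun q hq => add_smul_mem_sierpStage_succ hq he)
    rw [zero_add] at h_copy
    exact h_axis.trans h_copy

lemma fourJoined_sierpinski (hp : p ∈ sierpinski) : FourJoined sierpinski 0 p := by
  obtain ⟨i, hi⟩ := Set.mem_iUnion.mp hp
  exact (fourJoined_sierpStage hi).mono (Set.subset_iUnion _ i)

end Stage

section BlowUp

variable {s : Set (ℕ × ℕ)} {a b p q e : ℕ × ℕ}

lemma two_smul_add_mem_blowUp (hp : p ∈ s) {x y : ℕ} (hx : x ≤ 1) (hy : y ≤ 1) :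
    2 • p + (x, y) ∈ blowUp s :=
  Set.mem_biUnion hp ⟨x, by interval_cases x <;> simp, y, by interval_cases y <;> simp, rfl⟩

lemma two_smul_mem_blowUp (hp : p ∈ s) : 2 • p ∈ blowUp s := by
  simpa only [Prod.mk_zero_zero, add_zero] using two_smul_add_mem_blowUp hp zero_le_one zero_le_one

lemma two_smul_add_mem_blowUp_of_mem (hp : p ∈ s) (he : e ∈ V) : 2 • p + e ∈ blowUp s := by
  rcases he with rfl | rfl
  exacts [two_smul_add_mem_blowUp hp le_rfl zero_le_one,
    two_smul_add_mem_blowUp hp zero_le_one le_rfl]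

lemma fourJoined_blowUp_two_smul_add (hp : p ∈ s) (hpe : p + e ∈ s) (he : e ∈ V) :
    FourJoined (blowUp s) (2 • p) (2 • (p + e)) := by
  have h_mid : FourJoined (blowUp s) (2 • p) (2 • p + e) :=
    FourJoined.tail_add .refl (two_smul_mem_blowUp hp) he (two_smul_add_mem_blowUp_of_mem hp he)
  rw [smul_add, two_smul ℕ e, ← add_assoc]
  exact h_mid.tail_add (two_smul_add_mem_blowUp_of_mem hp he) he
    (by simpa [smul_add, two_smul, add_assoc] using two_smul_mem_blowUp hpe)

lemma FourJoined.blowUp (h : FourJoined s a b) : FourJoined (blowUp s) (2 • a) (2 • b) := by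
  induction h with
  | refl => exact .refl
  | tail _ hstep ih =>
    obtain ⟨hb, hc, hbc⟩ := hstep
    obtain ⟨e, he, rfl | rfl⟩ := fourAdj_iff_exists_mem.mp hbc
    · exact ih.trans (fourJoined_blowUp_two_smul_add hb hc he)
    · exact ih.trans (fourJoined_blowUp_two_smul_add hc hb he).symm

lemma fourJoined_blowUp_of_mem_block (hp : p ∈ s) (hq : q ∈ block p) :
    FourJoined (blowUp s) (2 • p) q := by
  obtain ⟨x, hx, y, hy, rfl⟩ := hq
  have h_right : FourJoined (blowUp s) (2 • p) (2 • p + (1, 0)) :=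
    FourJoined.tail_add .refl (two_smul_mem_blowUp hp) (by simp)
      (two_smul_add_mem_blowUp hp le_rfl zero_le_one)
  change FourJoined (blowUp s) (2 • p) (2 • p + (x, y))
  rcases hx with rfl | rfl <;> rcases hy with rfl | rfl
  · rw [Prod.mk_zero_zero, add_zero]
    exact .refl
  · exact FourJoined.tail_add .refl (two_smul_mem_blowUp hp) (by simp)
      (two_smul_add_mem_blowUp hp zero_le_one le_rfl)
  · exact h_right
  · simpa [add_assoc] using h_right.tail_add (two_smul_add_mem_blowUp hp le_rfl zero_le_one)
      (e := (0, 1)) (by simp) (by simpa [add_assoc] using two_smul_add_mem_blowUp hp le_rfl le_rfl)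

end BlowUp

/-- The scale-factor-2 discrete Sierpinski triangle is 4-connected: every
point of `S_{2△}` is joined to `(0,0)` by a finite path of 4-adjacent points
of `S_{2△}`. -/
theorem sierpinski2_fourConnected (p : ℕ × ℕ) (hp : p ∈ sierpinski2) :
    ∃ l : List (ℕ × ℕ), l.head? = some (0, 0) ∧ l.getLast? = some p ∧
      (∀ q ∈ l, q ∈ sierpinski2) ∧ l.Chain' FourAdj := by
  obtain ⟨q, hq, hpq⟩ : ∃ q ∈ sierpinski, p ∈ block q := by
    simpa only [sierpinski2, Set.mem_iUnion₂, exists_prop] using hp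
  have h_origin : (0 : ℕ × ℕ) ∈ sierpinski := Set.mem_iUnion.mpr ⟨0, rfl⟩
  have h_lift : FourJoined (blowUp sierpinski) 0 (2 • q) := by
    simpa only [smul_zero] using (fourJoined_sierpinski hq).blowUp
  exact FourJoined.exists_list (two_smul_mem_blowUp h_origin)
    (h_lift.trans (fourJoined_blowUp_of_mem_block hq hpq))
end
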